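/- arXiv:0811.1930 — 3 statements merged into one kernel-verified Lean document; each statement's English description precedes it below -/
import Mathlib

section
/- Let A be an m × 2 integer matrix and n ≥ 1. Every square submatrix of A ⊗ D(K_n) of order at least 2n − 1 has determinant zero. -/
open Matrix Kronecker

/-- Edges of the complete graph `K_n`. -/
def CompEdge (n : ℕ) := {e : Fin n × Fin n // e.1 < e.2}

instance (n : ℕ) : Fintype (CompEdge n) := by unfold CompEdge; infer_instance
instance (n : ℕ) : DecidableEq (CompEdge n) := by unfold CompEdge; infer_instance

/-- Incidence matrix of the complete graph `K_n`. -/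
def incK (n : ℕ) : Matrix (Fin n) (CompEdge n) ℤ :=
  fun v e => if v = e.1.1 then 1 else if v = e.1.2 then -1 else 0

open Kronecker

/-!
Over `ℚ`, the all-ones vector is a left null vector of `D(K_n)`, so `D(K_n)` has rank at most
`n - 1`. Factoring `A ⊗ D = (A ⊗ 1) (1₂ ⊗ D)` bounds the rank of `A ⊗ D(K_n)` by
`2 (n - 1) < 2n - 1`, and a square submatrix of order at least `2n - 1` has smaller rank than
its order, hence determinant zero.
-/

namespace Matrix

variable {K : Type*} {l m n p : Type*} [Fintype m] [Fintype n] [Fintype p]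
  [DecidableEq m] [DecidableEq p]

theorem rank_kronecker_le_rank_one_kronecker [CommSemiring K] [StrongRankCondition K]
    (A : Matrix l p K) (B : Matrix m n K) :
    (A ⊗ₖ B).rank ≤ ((1 : Matrix p p K) ⊗ₖ B).rank := by
  calc (A ⊗ₖ B).rank = ((A ⊗ₖ (1 : Matrix m m K)) * ((1 : Matrix p p K) ⊗ₖ B)).rank := by
        rw [← mul_kronecker_mul, Matrix.mul_one, Matrix.one_mul]
    _ ≤ _ := rank_mul_le_right _ _

theorem rank_one_kronecker_add_card_le_of_vecMul_eq_zero [Field K] (B : Matrix m n K)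
    {v : m → K} (hv : v ≠ 0) (hvB : v ᵥ* B = 0) :
    ((1 : Matrix p p K) ⊗ₖ B).rank + Fintype.card p ≤ Fintype.card p * Fintype.card m := by
  obtain ⟨i, hi⟩ := Function.ne_iff.mp hv
  set V : Matrix (p × Unit) (p × m) K := (1 : Matrix p p K) ⊗ₖ replicateRow Unit v
  -- `V` has full row rank: it has the right inverse `1 ⊗ (vᵢ⁻¹ eᵢ)`.
  have hV : V.rank = Fintype.card p := by
    have hinv : V * ((1 : Matrix p p K) ⊗ₖ replicateCol Unit (Pi.single i (v i)⁻¹)) = 1 := by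
      rw [← mul_kronecker_mul, Matrix.one_mul, ← one_kronecker_one]
      congr 1
      ext
      simpa using mul_inv_cancel₀ hi
    refine le_antisymm ((rank_le_card_height V).trans (by simp)) ?_
    calc Fintype.card p = (1 : Matrix (p × Unit) (p × Unit) K).rank := by simp
      _ ≤ V.rank := hinv ▸ rank_mul_le_left _ _
  have hVB : V * ((1 : Matrix p p K) ⊗ₖ B) = 0 := by
    rw [← mul_kronecker_mul, Matrix.one_mul, ← replicateRow_vecMul, hvB, replicateRow_zero,
      kronecker_zero]
  have := rank_add_rank_le_card_of_mul_eq_zero hVB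
  rw [hV, Fintype.card_prod] at this
  omega

end Matrix

theorem one_vecMul_incK {R : Type*} [Ring R] (n : ℕ) :
    (fun _ => 1) ᵥ* (incK n).map (Int.cast : ℤ → R) = 0 := by
  funext e
  have hne : e.1.2 ≠ e.1.1 := e.2.ne'
  simp only [vecMul, dotProduct, map_apply, incK, one_mul, Pi.zero_apply, apply_ite Int.cast,
    Int.cast_one, Int.cast_neg, Int.cast_zero]
  rw [Finset.sum_ite, Finset.sum_ite]
  simp [Finset.filter_eq', Finset.filter_ne', hne]

theorem det_large_submatrix_eq_zero_general (m n : ℕ) (hn : 1 ≤ n) (A : Matrix (Fin m) (Fin 2) ℤ)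
    (l : ℕ) (hl : 2 * n - 1 ≤ l)
    (f : Fin l → Fin m × Fin n) (g : Fin l → Fin 2 × CompEdge n) :
    ((A ⊗ₖ incK n).submatrix f g).det = 0 := by
  set D := (incK n).map (Int.cast : ℤ → ℚ)
  have hrank : ((A.map (Int.cast : ℤ → ℚ) ⊗ₖ D).submatrix f g).rank < l := by
    have hD := rank_one_kronecker_add_card_le_of_vecMul_eq_zero (p := Fin 2) D
      (Function.ne_iff.mpr ⟨⟨0, hn⟩, one_ne_zero⟩) (one_vecMul_incK n)
    simp only [Fintype.card_fin] at hD
    calc _ ≤ (A.map (Int.cast : ℤ → ℚ) ⊗ₖ D).rank := rank_submatrix_le _ _ _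
      _ ≤ ((1 : Matrix (Fin 2) (Fin 2) ℚ) ⊗ₖ D).rank := rank_kronecker_le_rank_one_kronecker _ _
      _ < l := by omega
  have hcast : ((A ⊗ₖ incK n).submatrix f g).map (Int.castRingHom ℚ) =
      (A.map (Int.cast : ℤ → ℚ) ⊗ₖ D).submatrix f g := by
    ext; simp [D]
  apply (Int.castRingHom ℚ).injective_int
  rw [RingHom.map_det, RingHom.mapMatrix_apply, hcast, map_zero]
  by_contra hdet
  simp [rank_of_det_ne_zero hdet] at hrank

/-- For an `m × 2` integer matrix `A` and `n ≥ 1`, every square submatrix of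
`A ⊗ D(K_n)` of order at least `2n - 1` has determinant zero. -/
theorem det_large_submatrix_eq_zero (m n : ℕ) (hn : 1 ≤ n) (A : Matrix (Fin m) (Fin 2) ℤ)
    (l : ℕ) (hl : 2 * n - 1 ≤ l)
    (f : Fin l → Fin m × Fin n) (g : Fin l → Fin 2 × CompEdge n)
    (hf : Function.Injective f) (hg : Function.Injective g) :
    ((A ⊗ₖ incK n).submatrix f g).det = 0 :=
  det_large_submatrix_eq_zero_general m n hn A l hl f g
end

section
/- Let A be an m × 2 matrix over a commutative ring, let i, j ∈ [m], and let n ≥ 2. The (2n−2) × (2n−2) block matrix N = ((L_i, R_i), (L_j, R_j)), where for index t ∈ {i, j} the (n−1)×(n−1) matrix L_t is lower bidiagonal with diagonal entries a_{t1} and subdiagonal entries −a_{t1}, and R_t is lower bidiagonal with diagonal entries a_{t2} and subdiagonal entries −a_{t2}, has determinant (a_{i1}a_{j2} − a_{i2}a_{j1})^{n−1}. -/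
open Matrix Kronecker

/-- Lower bidiagonal `k × k` matrix with diagonal entries `d` and subdiagonal entries `s`. -/
def bidiag {R : Type*} [CommRing R] (k : ℕ) (d s : R) : Matrix (Fin k) (Fin k) R :=
  fun i j => if i = j then d else if (i : ℕ) = (j : ℕ) + 1 then s else 0

lemma bidiag_smul {R : Type*} [CommRing R] (k : ℕ) (d : R) :
    bidiag k d (-d) = d • bidiag k 1 (-1) := by
  ext a b
  simp only [bidiag, Matrix.smul_apply, smul_eq_mul]
  split_ifs <;> ring

lemma det_bidiag_one {R : Type*} [CommRing R] (k : ℕ) :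
    (bidiag k 1 (-1 : R)).det = 1 := by
  rw [Matrix.det_of_lowerTriangular]
  · simp [bidiag]
  · intro a b hab
    have h : (a : ℕ) < (b : ℕ) := hab
    simp only [bidiag, Fin.ext_iff]
    rw [if_neg (by omega), if_neg (by omega)]

def sumEquiv (k : ℕ) : (Fin k ⊕ Fin k) ≃ (Fin 2 × Fin k) where
  toFun := Sum.elim (fun x => (0, x)) (fun x => (1, x))
  invFun := fun p => if p.1 = 0 then Sum.inl p.2 else Sum.inr p.2
  left_inv := by rintro (x | x) <;> simp
  right_inv := by
    rintro ⟨p, x⟩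
    fin_cases p <;> simp

/-- The `(2n-2) × (2n-2)` block matrix built from lower bidiagonal blocks
with diagonals `a_{i1}, a_{i2}, a_{j1}, a_{j2}` and corresponding negated subdiagonals
has determinant `(a_{i1} a_{j2} - a_{i2} a_{j1})^(n-1)`. -/
theorem det_two_row_block_matrix {R : Type*} [CommRing R] (m n : ℕ) (hn : 2 ≤ n)
    (A : Matrix (Fin m) (Fin 2) R) (i j : Fin m) :
    (Matrix.fromBlocks
      (bidiag (n - 1) (A i 0) (-(A i 0))) (bidiag (n - 1) (A i 1) (-(A i 1)))
      (bidiag (n - 1) (A j 0) (-(A j 0))) (bidiag (n - 1) (A j 1) (-(A j 1)))).det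
      = (A i 0 * A j 1 - A i 1 * A j 0) ^ (n - 1) := by
  set k := n - 1
  have key : (Matrix.fromBlocks
      (bidiag k (A i 0) (-(A i 0))) (bidiag k (A i 1) (-(A i 1)))
      (bidiag k (A j 0) (-(A j 0))) (bidiag k (A j 1) (-(A j 1))))
      = ((!![A i 0, A i 1; A j 0, A j 1]) ⊗ₖ (bidiag k 1 (-1))).submatrix
         (sumEquiv k) (sumEquiv k) := by
    ext a b
    rcases a with a | a <;> rcases b with b | b <;>
      (simp only [Matrix.submatrix_apply, sumEquiv, Equiv.coe_fn_mk, Sum.elim_inl, Sum.elim_inr,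
        Matrix.kroneckerMap_apply, Matrix.fromBlocks_apply₁₁, Matrix.fromBlocks_apply₁₂,
        Matrix.fromBlocks_apply₂₁, Matrix.fromBlocks_apply₂₂, bidiag, Matrix.of_apply,
        Matrix.cons_val_zero, Matrix.cons_val_one, Matrix.head_cons, Matrix.cons_val',
        Matrix.empty_val', Matrix.cons_val_fin_one, Matrix.head_fin_const]
       split_ifs <;> ring)
  rw [key, Matrix.det_submatrix_equiv_self, Matrix.det_kronecker, det_bidiag_one,
    Matrix.det_fin_two_of, one_pow, mul_one]
  simp [Fintype.card_fin]
end

section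
/- Let A be an m × 2 integer matrix, not identically zero, A' the (m+1) × 2 matrix obtained from A by appending the row (1, 0), and n ≥ 1. Then lcmd(A' ⊗ D(K_n)) = lcmd(A ⊗ D(K_n)). -/
open Matrix Kronecker

/-- lcmd: lcm of the absolute values of all nonzero subdeterminants. -/
def lcmd {α β : Type*} [Fintype α] [DecidableEq α] [Fintype β] [DecidableEq β]
    (M : Matrix α β ℤ) : ℕ :=
  (((Finset.univ : Finset (Σ k : Fin (Fintype.card α + 1), (Fin k.1 → α) × (Fin k.1 → β))).image
    (fun x => ((M.submatrix x.2.1 x.2.2).det).natAbs)).erase 0).lcm id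

/-! Replace `D(K_n)` by the matrix `arcInc n` whose columns are `e_u - e_v` for all ordered pairs
`(u, v)`: its columns are zero or `±` columns of `D(K_n)`, so the lcmd does not change. A nonzero
minor of `A' ⊗ arcInc n` using a row of the appended block `(1, 0) ⊗ arcInc n` has a `±1` pivot
there, in a column `(0, (w₀, w₁))`; eliminating it leaves, up to sign, a smaller minor of the same
matrix in which every column `(0, (u, v))` is rerouted by `w₀ ↦ w₁` (contracting the edge `w₀w₁`).
Induction ends with a minor of `A ⊗ arcInc n`. -/

def IsAbsMinor {α β : Type*} (M : Matrix α β ℤ) (d : ℕ) : Prop :=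
  ∃ (k : ℕ) (r : Fin k → α) (c : Fin k → β), (M.submatrix r c).det.natAbs = d

theorem IsAbsMinor.of_submatrix {α β α' β' : Type*} {M : Matrix α β ℤ} {f : α' → α}
    {g : β' → β} {d : ℕ} (h : IsAbsMinor (M.submatrix f g) d) : IsAbsMinor M d := by
  obtain ⟨k, r, c, hd⟩ := h
  exact ⟨k, f ∘ r, g ∘ c, hd⟩

section lcmd

variable {α β γ δ : Type*} [Fintype α] [DecidableEq α] [Fintype β] [DecidableEq β]
  [Fintype γ] [DecidableEq γ] [Fintype δ] [DecidableEq δ]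

theorem dvd_lcmd {M : Matrix α β ℤ} {d : ℕ} (h : IsAbsMinor M d) (hd : d ≠ 0) :
    d ∣ lcmd M := by
  obtain ⟨k, r, c, rfl⟩ := h
  have hr : Function.Injective r := fun i j hij => by
    by_contra hne
    exact hd (by rw [det_zero_of_row_eq hne (by ext; simp [hij]), Int.natAbs_zero])
  have hk : k < Fintype.card α + 1 := by
    simpa using Nat.lt_succ_of_le (Fintype.card_le_of_injective r hr)
  exact Finset.dvd_lcm <|
    Finset.mem_erase.2 ⟨hd, Finset.mem_image.2 ⟨⟨⟨k, hk⟩, r, c⟩, Finset.mem_univ _, rfl⟩⟩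

theorem lcmd_dvd {M : Matrix α β ℤ} {x : ℕ} (h : ∀ d, IsAbsMinor M d → d ≠ 0 → d ∣ x) :
    lcmd M ∣ x := by
  refine Finset.lcm_dvd fun d hd => ?_
  obtain ⟨hd0, ⟨⟨k, r, c⟩, -, rfl⟩⟩ := Finset.mem_erase.1 hd |>.imp_right Finset.mem_image.1
  exact h _ ⟨k, r, c, rfl⟩ hd0

theorem lcmd_dvd_lcmd {M : Matrix α β ℤ} {N : Matrix γ δ ℤ}
    (h : ∀ d, IsAbsMinor M d → d ≠ 0 → IsAbsMinor N d) : lcmd M ∣ lcmd N :=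
  lcmd_dvd fun d hM hd => dvd_lcmd (h d hM hd) hd

theorem lcmd_submatrix_dvd (M : Matrix γ δ ℤ) (f : α → γ) (g : β → δ) :
    lcmd (M.submatrix f g) ∣ lcmd M :=
  lcmd_dvd_lcmd fun _ h _ => h.of_submatrix

end lcmd

theorem det_eq_pivot {R : Type*} [CommRing R] {k : ℕ} (M : Matrix (Fin (k + 1)) (Fin (k + 1)) R)
    (i₀ j₀ : Fin (k + 1)) (h : M i₀ j₀ * M i₀ j₀ = 1) :
    M.det = (-1) ^ (i₀ + j₀ : ℕ) * M i₀ j₀ * (of fun i j =>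
      M (i₀.succAbove i) (j₀.succAbove j) -
        M i₀ j₀ * M (i₀.succAbove i) j₀ * M i₀ (j₀.succAbove j)).det := by
  set ε := M i₀ j₀
  let c : Fin (k + 1) → R := fun i => if i = i₀ then 0 else -(ε * M i j₀)
  let N : Matrix (Fin (k + 1)) (Fin (k + 1)) R := of fun i j => M i j + c i * M i₀ j
  have hN : N.det = M.det :=
    det_eq_of_forall_row_eq_smul_add_const c i₀ (by simp [c]) fun _ _ => rfl
  have hcol : ∀ i ≠ i₀, N i j₀ = 0 := fun i hi => by
    simp only [N, c, of_apply, if_neg hi]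
    linear_combination (-M i j₀) * h
  rw [← hN, det_succ_column N j₀, Finset.sum_eq_single i₀ (fun i _ hi => by simp [hcol i hi])
    (by simp)]
  congr 2
  · simp [N, c, ε]
  · ext i j
    simp [N, c, Fin.succAbove_ne]
    ring

def arcInc (n : ℕ) : Matrix (Fin n) (Fin n × Fin n) ℤ :=
  of fun w e => (if w = e.1 then 1 else 0) - (if w = e.2 then 1 else 0)

section arcInc

variable {n : ℕ}

theorem arcInc_apply (w : Fin n) (e : Fin n × Fin n) :
    arcInc n w e = (if w = e.1 then 1 else 0) - (if w = e.2 then 1 else 0) :=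
  rfl

theorem arcInc_apply_swap (w : Fin n) (e : Fin n × Fin n) : arcInc n w e.swap = -arcInc n w e := by
  simp only [arcInc_apply, Prod.fst_swap, Prod.snd_swap]
  ring

theorem incK_apply_eq_arcInc (w : Fin n) (e : CompEdge n) : incK n w e = arcInc n w e.1 := by
  obtain ⟨⟨u, v⟩, huv : u < v⟩ := e
  by_cases hu : w = u <;> by_cases hv : w = v <;> simp_all [incK, arcInc_apply, huv.ne, huv.ne']

theorem incK_eq_submatrix_arcInc : incK n = (arcInc n).submatrix id fun e : CompEdge n => e.1 :=
  Matrix.ext incK_apply_eq_arcInc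

theorem arcInc_orient {w₀ : Fin n} {e : Fin n × Fin n} (h : arcInc n w₀ e ≠ 0) :
    ∃ w₁, arcInc n w₀ e * arcInc n w₀ e = 1 ∧
      ∀ w, arcInc n w₀ e * arcInc n w e = arcInc n w (w₀, w₁) := by
  obtain ⟨u, v⟩ := e
  by_cases hu : w₀ = u <;> by_cases hv : w₀ = v
  · simp_all [arcInc_apply]
  · subst hu
    exact ⟨v, by simp [arcInc_apply, hv], fun w => by simp [arcInc_apply, hv]⟩
  · subst hv
    refine ⟨u, by simp [arcInc_apply, hu], fun w => ?_⟩
    simp only [arcInc_apply, hu, if_true, if_false]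
    ring
  · simp_all [arcInc_apply]

theorem arcInc_sub_mul (w₀ w₁ w : Fin n) (e : Fin n × Fin n) :
    arcInc n w e - arcInc n w (w₀, w₁) * arcInc n w₀ e =
      arcInc n w (Prod.map (Function.update id w₀ w₁) (Function.update id w₀ w₁) e) := by
  have key : ∀ x : Fin n, (if w = x then 1 else 0) -
      ((if w = w₀ then 1 else 0) - (if w = w₁ then 1 else 0)) * (if w₀ = x then 1 else 0) =
        (if w = Function.update id w₀ w₁ x then 1 else (0 : ℤ)) := fun x => by
    by_cases hx : x = w₀
    · subst hx; simp
    · simp [Function.update_of_ne hx, Ne.symm hx]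
  simp only [arcInc_apply, Prod.map_fst, Prod.map_snd, ← key]
  ring

end arcInc

theorem IsAbsMinor.of_col_eq_unit_mul {α β γ : Type*} {N : Matrix α γ ℤ} {M : Matrix α β ℤ}
    (h : ∀ c, (∃ a, N a c ≠ 0) → ∃ b, ∃ s : ℤˣ, ∀ a, N a c = s * M a b) {d : ℕ}
    (hN : IsAbsMinor N d) (hd : d ≠ 0) : IsAbsMinor M d := by
  obtain ⟨k, r, c, rfl⟩ := hN
  have hcol : ∀ j, ∃ a, N a (c j) ≠ 0 := fun j => by
    by_contra! h0
    exact hd (by rw [det_eq_zero_of_column_eq_zero j fun i => h0 (r i), Int.natAbs_zero])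
  choose b s hs using fun j => h (c j) (hcol j)
  have hsub : N.submatrix r c = of fun i j => (s j : ℤ) * M.submatrix r b i j := by
    ext i j
    simp [hs]
  refine ⟨k, r, b, ?_⟩
  rw [hsub, det_mul_row, Int.natAbs_mul, ← Units.coe_prod, Int.units_natAbs, one_mul]

theorem lcmd_kronecker_arcInc {α β : Type*} [Fintype α] [DecidableEq α] [Fintype β]
    [DecidableEq β] (A : Matrix α β ℤ) (n : ℕ) :
    lcmd (A ⊗ₖ arcInc n) = lcmd (A ⊗ₖ incK n) := by
  refine Nat.dvd_antisymm (lcmd_dvd_lcmd fun d h hd => h.of_col_eq_unit_mul ?_ hd) ?_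
  · rintro ⟨b, u, v⟩ ⟨_, ha⟩
    rcases lt_trichotomy u v with huv | rfl | hvu
    · refine ⟨(b, ⟨(u, v), huv⟩), 1, fun a => ?_⟩
      rw [kroneckerMap_apply, kroneckerMap_apply, incK_apply_eq_arcInc]
      simp
    · simp [arcInc_apply] at ha
    · refine ⟨(b, ⟨(v, u), hvu⟩), -1, fun a => ?_⟩
      have hswap := arcInc_apply_swap a.2 (u, v)
      rw [Prod.swap_prod_mk] at hswap
      rw [kroneckerMap_apply, kroneckerMap_apply, incK_apply_eq_arcInc]
      simp [hswap]
  · rw [incK_eq_submatrix_arcInc, kroneckerMap_submatrix_right]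
    exact lcmd_submatrix_dvd _ _ _

section AppendRow

variable {m n : ℕ} {β : Type*} {A' : Matrix (Fin (m + 1)) β ℤ}

theorem isAbsMinor_submatrix_castSucc_of_forall_ne_last {ι γ : Type*} {B : Matrix ι γ ℤ} {k : ℕ}
    (r : Fin k → Fin (m + 1) × ι) (c : Fin k → β × γ) (hr : ∀ i, (r i).1 ≠ Fin.last m) :
    IsAbsMinor (A'.submatrix Fin.castSucc id ⊗ₖ B) ((A' ⊗ₖ B).submatrix r c).det.natAbs := by
  refine ⟨k, fun i => ((r i).1.castPred (hr i), (r i).2), c, ?_⟩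
  rw [kroneckerMap_submatrix_left, submatrix_submatrix]
  congr 4

variable [DecidableEq β] {b₀ : β}

theorem exists_natAbs_det_eq_of_pivot_row (hlast : A' (Fin.last m) = Pi.single b₀ 1) {k : ℕ}
    (r : Fin (k + 1) → Fin (m + 1) × Fin n) (c : Fin (k + 1) → β × (Fin n × Fin n))
    {i₀ : Fin (k + 1)} (hi₀ : (r i₀).1 = Fin.last m)
    (hdet : ((A' ⊗ₖ arcInc n).submatrix r c).det ≠ 0) :
    ∃ (r' : Fin k → Fin (m + 1) × Fin n) (c' : Fin k → β × (Fin n × Fin n)),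
      ((A' ⊗ₖ arcInc n).submatrix r c).det.natAbs =
        ((A' ⊗ₖ arcInc n).submatrix r' c').det.natAbs := by
  set M := (A' ⊗ₖ arcInc n).submatrix r c
  have hrow : ∀ j, M i₀ j = (Pi.single b₀ 1 : β → ℤ) (c j).1 * arcInc n (r i₀).2 (c j).2 :=
    fun j => by simp [M, hi₀, hlast]
  obtain ⟨j₀, hj₀⟩ : ∃ j, M i₀ j ≠ 0 := by
    by_contra! h0
    exact hdet (det_eq_zero_of_row_eq_zero i₀ h0)
  have hb₀ : (c j₀).1 = b₀ := by
    by_contra hne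
    simp [hrow, hne] at hj₀
  have hpivot : M i₀ j₀ = arcInc n (r i₀).2 (c j₀).2 := by simp [hrow, hb₀]
  obtain ⟨w₁, hunit, horient⟩ := arcInc_orient (hpivot ▸ hj₀)
  have hsq : M i₀ j₀ * M i₀ j₀ = 1 := hpivot ▸ hunit
  let σ := Function.update id (r i₀).2 w₁
  let c' : Fin (k + 1) → β × (Fin n × Fin n) := fun j =>
    if (c j).1 = b₀ then ((c j).1, Prod.map σ σ (c j).2) else c j
  refine ⟨r ∘ i₀.succAbove, c' ∘ j₀.succAbove, ?_⟩
  rw [det_eq_pivot M i₀ j₀ hsq, Int.natAbs_mul, Int.natAbs_mul,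
    Int.natAbs_of_isUnit (IsUnit.of_mul_eq_one _ hsq), mul_one,
    Int.natAbs_pow, Int.natAbs_neg, Int.natAbs_one, one_pow, one_mul]
  congr 2
  ext i j
  rw [of_apply, hpivot, hrow]
  simp only [M, submatrix_apply, kroneckerMap_apply, Function.comp_apply, c', σ, hb₀]
  by_cases hj : (c (j₀.succAbove j)).1 = b₀
  · rw [if_pos hj, hj, Pi.single_eq_same, ← arcInc_sub_mul, ← horient]
    ring
  · simp [hj]

theorem IsAbsMinor.of_last_row_eq_single (hlast : A' (Fin.last m) = Pi.single b₀ 1) {d : ℕ}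
    (h : IsAbsMinor (A' ⊗ₖ arcInc n) d) (hd : d ≠ 0) :
    IsAbsMinor (A'.submatrix Fin.castSucc id ⊗ₖ arcInc n) d := by
  obtain ⟨k, r, c, rfl⟩ := h
  induction k with
  | zero => exact ⟨0, Fin.elim0, Fin.elim0, by simp⟩
  | succ k ih =>
    by_cases hr : ∃ i₀, (r i₀).1 = Fin.last m
    · obtain ⟨i₀, hi₀⟩ := hr
      obtain ⟨r', c', heq⟩ :=
        exists_natAbs_det_eq_of_pivot_row hlast r c hi₀ (Int.natAbs_ne_zero.1 hd)
      rw [heq] at hd ⊢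
      exact ih r' c' hd
    · exact isAbsMinor_submatrix_castSucc_of_forall_ne_last r c fun i hi => hr ⟨i, hi⟩

end AppendRow

theorem lcmd_kronecker_append_identity_row_general (m n : ℕ)
    (A : Matrix (Fin m) (Fin 2) ℤ)
    (A' : Matrix (Fin (m + 1)) (Fin 2) ℤ)
    (hA' : A' = Matrix.of (Fin.snoc (fun i => A i) ![1, 0])) :
    lcmd (A' ⊗ₖ incK n) = lcmd (A ⊗ₖ incK n) := by
  have hlast : A' (Fin.last m) = Pi.single 0 1 := by
    subst hA'
    ext b
    fin_cases b <;> simp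
  have hA : A'.submatrix Fin.castSucc id = A := by
    subst hA'
    ext i j
    simp
  rw [← lcmd_kronecker_arcInc, ← lcmd_kronecker_arcInc]
  refine Nat.dvd_antisymm (lcmd_dvd_lcmd fun d h hd => hA ▸ h.of_last_row_eq_single hlast hd) ?_
  rw [← hA, kroneckerMap_submatrix_left]
  exact lcmd_submatrix_dvd _ _ _

/-- appending the row `(1, 0)` to a nonzero `m × 2` integer matrix `A` does
not change `lcmd(A ⊗ D(K_n))`. -/
theorem lcmd_kronecker_append_identity_row (m n : ℕ) (hn : 1 ≤ n)
    (A : Matrix (Fin m) (Fin 2) ℤ) (hA : A ≠ 0)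
    (A' : Matrix (Fin (m + 1)) (Fin 2) ℤ)
    (hA' : A' = Matrix.of (Fin.snoc (fun i => A i) ![1, 0])) :
    lcmd (A' ⊗ₖ incK n) = lcmd (A ⊗ₖ incK n) :=
  lcmd_kronecker_append_identity_row_general m n A A' hA'
end
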